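/- Let p be a prime and H, H' finite graphs with no automorphisms of order p. If hom(G,H) ≡ hom(G,H') (mod p) for all graphs G, then inj(G,H) ≡ inj(G,H') (mod p) for all graphs G, where inj counts injective homomorphisms. -/

import Mathlib

structure SGraph (V : Type) where
  Adj : V → V → Prop
  symm : ∀ u v, Adj u v → Adj v u

def SGraph.IsHom {V W : Type} (G : SGraph V) (H : SGraph W) (f : V → W) : Prop :=
  ∀ u v, G.Adj u v → H.Adj (f u) (f v)

noncomputable def homCount {V W : Type} (G : SGraph V) (H : SGraph W) : ℕ :=
  Nat.card {f : V → W // G.IsHom H f}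

def SGraph.IsAut {V : Type} (H : SGraph V) (σ : Equiv.Perm V) : Prop :=
  ∀ u v, H.Adj u v ↔ H.Adj (σ u) (σ v)

def SGraph.fixedSubgraph {V : Type} (H : SGraph V) (σ : Equiv.Perm V) :
    SGraph {v : V // σ v = v} :=
  ⟨fun u v => H.Adj u v, fun u v h => H.symm u v h⟩
noncomputable def injCount {V W : Type} (G : SGraph V) (H : SGraph W) : ℕ :=
  Nat.card {f : V → W // G.IsHom H f ∧ Function.Injective f}

/-!
Every homomorphism `f : G → H` factors uniquely as the quotient map `G → G/ker f` followed by
an injective homomorphism `G/ker f → H`, so `hom(G, H) = ∑_Θ inj(G/Θ, H)` over all partitions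
`Θ` of `V(G)`. The term for the discrete partition is `inj(G, H)`, and every other `G/Θ` has
fewer vertices, so by strong induction on `|V(G)|` the congruences for `hom` propagate to `inj`.
-/

open Finset

instance Setoid.instFinite {U : Type*} [Finite U] : Finite (Setoid U) :=
  Finite.of_injective (fun s : Setoid U => (⇑s : U → U → Prop))
    fun _ _ h => Setoid.ext fun a b => iff_of_eq (congrFun (congrFun h a) b)

namespace SGraph

variable {U W : Type}

def quot (G : SGraph U) (s : Setoid U) : SGraph (Quotient s) where
  Adj x y := ∃ u v, Quotient.mk s u = x ∧ Quotient.mk s v = y ∧ G.Adj u v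
  symm := by rintro x y ⟨u, v, hu, hv, h⟩; exact ⟨v, u, hv, hu, G.symm u v h⟩

def injHomQuotEquiv (G : SGraph U) (H : SGraph W) (s : Setoid U) :
    {g : Quotient s → W // (G.quot s).IsHom H g ∧ Function.Injective g} ≃
      {f : U → W // G.IsHom H f ∧ Setoid.ker f = s} where
  toFun g := ⟨g.1 ∘ Quotient.mk s, fun u v h => g.2.1 _ _ ⟨u, v, rfl, rfl, h⟩,
    Setoid.ext fun _ _ => g.2.2.eq_iff.trans Quotient.eq⟩
  invFun f := ⟨Quotient.lift f.1 f.2.2.ge,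
    by rintro _ _ ⟨u, v, rfl, rfl, h⟩; exact f.2.1 u v h,
    (Setoid.lift_injective_iff_ker_eq_of_le f.2.2.ge).2 f.2.2⟩
  left_inv g := Subtype.ext <| funext <| Quotient.ind fun _ => rfl
  right_inv _ := rfl

theorem injCount_quot (G : SGraph U) (H : SGraph W) (s : Setoid U) :
    injCount (G.quot s) H = Nat.card {f : U → W // G.IsHom H f ∧ Setoid.ker f = s} :=
  Nat.card_congr (injHomQuotEquiv G H s)

theorem injCount_quot_bot (G : SGraph U) (H : SGraph W) :
    injCount (G.quot ⊥) H = injCount G H := by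
  rw [injCount_quot]
  exact Nat.card_congr <| Equiv.subtypeEquivRight fun f =>
    and_congr_right' (Setoid.injective_iff_ker_bot f).symm

theorem homCount_eq_sum_injCount_quot [Finite U] [Finite W] [Fintype (Setoid U)]
    (G : SGraph U) (H : SGraph W) :
    homCount G H = ∑ s : Setoid U, injCount (G.quot s) H := by
  simp only [injCount_quot]
  rw [← Nat.card_sigma, homCount]
  refine Nat.card_congr <|
    (Equiv.sigmaFiberEquiv fun f : {f // G.IsHom H f} => Setoid.ker f.1).symm.trans <|
      Equiv.sigmaCongrRight fun s =>
        Equiv.subtypeSubtypeEquivSubtypeInter _ fun f => Setoid.ker f = s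

theorem homCount_eq_injCount_add_sum [Finite U] [Finite W] [Fintype (Setoid U)]
    [DecidableEq (Setoid U)] (G : SGraph U) (H : SGraph W) :
    homCount G H = injCount G H + ∑ s ∈ univ.erase ⊥, injCount (G.quot s) H := by
  rw [homCount_eq_sum_injCount_quot, ← add_sum_erase _ _ (mem_univ ⊥), injCount_quot_bot]

end SGraph

theorem Setoid.card_quotient_lt {U : Type*} [Finite U] {s : Setoid U} (hs : s ≠ ⊥) :
    Nat.card (Quotient s) < Nat.card U := by
  have := Fintype.ofFinite U
  have := Fintype.ofFinite (Quotient s)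
  simp only [Nat.card_eq_fintype_card]
  refine Fintype.card_lt_of_surjective_not_injective _ Quotient.mk_surjective fun h => hs ?_
  rwa [Setoid.injective_iff_ker_bot, Setoid.ker_mk_eq] at h

theorem stmt4_general (p : ℕ) {V W : Type} [Fintype V] [Fintype W]
    (H : SGraph V) (H' : SGraph W)
    (hhom : ∀ (U : Type) [Fintype U] (G : SGraph U),
      homCount G H ≡ homCount G H' [MOD p]) :
    ∀ (U : Type) [Fintype U] (G : SGraph U),
      injCount G H ≡ injCount G H' [MOD p] := by
  intro U _ G
  induction hn : Nat.card U using Nat.strong_induction_on generalizing U with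
  | _ n ih =>
    subst hn
    classical
    have := Fintype.ofFinite (Setoid U)
    have hquot : ∑ s ∈ univ.erase ⊥, injCount (G.quot s) H ≡
        ∑ s ∈ univ.erase ⊥, injCount (G.quot s) H' [MOD p] := by
      refine Nat.ModEq.sum fun s hs => ?_
      have := Fintype.ofFinite (Quotient s)
      exact ih _ (Setoid.card_quotient_lt (ne_of_mem_erase hs)) _ (G.quot s) rfl
    have hG := hhom U G
    rw [G.homCount_eq_injCount_add_sum, G.homCount_eq_injCount_add_sum] at hG
    exact Nat.ModEq.add_right_cancel hquot hG

/-- If H, H' have no automorphisms of order p and hom(G,H) ≡ hom(G,H') mod p for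
all G, then inj(G,H) ≡ inj(G,H') mod p for all G. -/
theorem stmt4 (p : ℕ) (hp : p.Prime) {V W : Type} [Fintype V] [Fintype W]
    (H : SGraph V) (H' : SGraph W)
    (hH : ¬∃ σ : Equiv.Perm V, H.IsAut σ ∧ orderOf σ = p)
    (hH' : ¬∃ σ : Equiv.Perm W, H'.IsAut σ ∧ orderOf σ = p)
    (hhom : ∀ (U : Type) [Fintype U] (G : SGraph U),
      homCount G H ≡ homCount G H' [MOD p]) :
    ∀ (U : Type) [Fintype U] (G : SGraph U),
      injCount G H ≡ injCount G H' [MOD p] :=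
  stmt4_general p H H' hhom
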